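/- arXiv:1904.08855 — 2 statements merged into one kernel-verified Lean document; each statement's English description precedes it below -/
import Mathlib

section
/- Suppose conditions (C) hold: γ(S,σ) + 2ξ(S)·η(σ) < 1 and ξ(S) − η(σ) ≤ 1, and suppose ξ_i(S) > 0 for all i. Then every u ∈ ℂ^n with all components nonzero satisfying u = F(u) and |u_i − 1| < r̄·|u_i| for all i must satisfy |u_i − (1 − η_i(σ))| ≤ r̲·ξ_i(S) for all i. In other words, there are no fixed points of F in U(r̄) outside the closure of D(r̲). -/
open Complex

/-- `η_i(σ) := Σ_j Z̃_{ij} · conj(σ_j)` -/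
noncomputable def etaI {n : ℕ} (Z : Matrix (Fin n) (Fin n) ℂ) (σ : Fin n → ℂ) (i : Fin n) : ℂ :=
  ∑ j, Z i j * (starRingEnd ℂ) (σ j)

/-- `ξ_i(S) := Σ_j |Z̃_{ij} · S_j|` -/
noncomputable def xiI {n : ℕ} (Z : Matrix (Fin n) (Fin n) ℂ) (S : Fin n → ℂ) (i : Fin n) : ℝ :=
  ∑ j, ‖Z i j * S j‖

/-- `γ_i(S,σ) := 2(ξ_i(S) + Re η_i(σ)) − ξ_i(S)² − |η_i(σ)|²` -/
noncomputable def gammaI {n : ℕ} (Z : Matrix (Fin n) (Fin n) ℂ) (S σ : Fin n → ℂ)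
    (i : Fin n) : ℝ :=
  2 * (xiI Z S i + (etaI Z σ i).re) - (xiI Z S i) ^ 2 - (‖etaI Z σ i‖) ^ 2

/-- `η(σ) := max_i |η_i(σ)|` -/
noncomputable def etaMax {n : ℕ} (Z : Matrix (Fin n) (Fin n) ℂ) (σ : Fin n → ℂ) : ℝ :=
  ⨆ i, ‖etaI Z σ i‖

/-- `ξ(S) := max_i ξ_i(S)` -/
noncomputable def xiMax {n : ℕ} (Z : Matrix (Fin n) (Fin n) ℂ) (S : Fin n → ℂ) : ℝ :=
  ⨆ i, xiI Z S i

/-- `γ(S,σ) := max_i γ_i(S,σ)` -/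
noncomputable def gammaMax {n : ℕ} (Z : Matrix (Fin n) (Fin n) ℂ) (S σ : Fin n → ℂ) : ℝ :=
  ⨆ i, gammaI Z S σ i

/-- `r̲ := sqrt((1−γ − √Δ)/(2ξ(S)²))` where `Δ = (1−γ)² − 4ξ(S)²η(σ)²` -/
noncomputable def rLow {n : ℕ} (Z : Matrix (Fin n) (Fin n) ℂ) (S σ : Fin n → ℂ) : ℝ :=
  Real.sqrt ((1 - gammaMax Z S σ -
      Real.sqrt ((1 - gammaMax Z S σ) ^ 2 - 4 * (xiMax Z S) ^ 2 * (etaMax Z σ) ^ 2)) /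
    (2 * (xiMax Z S) ^ 2))

/-- `r̄ := sqrt((1−γ + √Δ)/(2ξ(S)²))` where `Δ = (1−γ)² − 4ξ(S)²η(σ)²` -/
noncomputable def rHigh {n : ℕ} (Z : Matrix (Fin n) (Fin n) ℂ) (S σ : Fin n → ℂ) : ℝ :=
  Real.sqrt ((1 - gammaMax Z S σ +
      Real.sqrt ((1 - gammaMax Z S σ) ^ 2 - 4 * (xiMax Z S) ^ 2 * (etaMax Z σ) ^ 2)) /
    (2 * (xiMax Z S) ^ 2))

/-- the fixed point power flow map
`F(u)_i := 1 − Σ_j Z̃_{ij}·conj(σ_j) + Σ_j Z̃_{ij}·(1 − 1/conj(u_j))·conj(S_j)` -/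
noncomputable def pfMap {n : ℕ} (Z : Matrix (Fin n) (Fin n) ℂ) (S σ : Fin n → ℂ)
    (u : Fin n → ℂ) : Fin n → ℂ :=
  fun i => 1 - ∑ j, Z i j * (starRingEnd ℂ) (σ j)
    + ∑ j, Z i j * (1 - 1 / (starRingEnd ℂ) (u j)) * (starRingEnd ℂ) (S j)

/-! Let `t` be the largest ratio `‖u j - 1‖ / ‖u j‖` of a fixed point `u`. The fixed-point equation
puts each `u i` in the closed disk of radius `t ξ_i` about `1 - η_i`, so it suffices to exclude
`r̲ < t < r̄`. For such `t` the quadratic `ξ² t⁴ - (1 - γ) t² + η²` is negative, and so is its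
analogue for the index `m` attaining `t`. After the affine change `w = 1 - (1 - t²) u` the region
`‖u - 1‖ < t ‖u‖` is the inside (`t < 1`) or outside (`t > 1`) of the circle of radius `t` about `0`,
and this negativity says that the image of the disk about `1 - η_m` lies in it. Hence
`‖u m - 1‖ < t ‖u m‖`, contradicting the choice of `m`. -/

section Quadratic

variable {a b G x : ℝ}

theorem quadratic_neg_of_mem_Ioo_roots (ha : 0 < a) (hΔ : 0 ≤ G ^ 2 - 4 * a ^ 2 * b ^ 2)
    (hlo : (G - Real.sqrt (G ^ 2 - 4 * a ^ 2 * b ^ 2)) / (2 * a ^ 2) < x)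
    (hhi : x < (G + Real.sqrt (G ^ 2 - 4 * a ^ 2 * b ^ 2)) / (2 * a ^ 2)) :
    a ^ 2 * x ^ 2 - G * x + b ^ 2 < 0 := by
  set s := Real.sqrt (G ^ 2 - 4 * a ^ 2 * b ^ 2)
  have hs : s ^ 2 = G ^ 2 - 4 * a ^ 2 * b ^ 2 := Real.sq_sqrt hΔ
  have ha2 : 0 < 2 * a ^ 2 := by positivity
  rw [div_lt_iff₀ ha2] at hlo
  rw [lt_div_iff₀ ha2] at hhi
  have hfac : 4 * a ^ 2 * (a ^ 2 * x ^ 2 - G * x + b ^ 2)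
      = (x * (2 * a ^ 2) - (G - s)) * (x * (2 * a ^ 2) - (G + s)) := by
    linear_combination hs
  have : 4 * a ^ 2 * (a ^ 2 * x ^ 2 - G * x + b ^ 2) < 0 := by
    rw [hfac]; exact mul_neg_of_pos_of_neg (by linarith) (by linarith)
  nlinarith

theorem le_lower_root_of_quadratic_nonneg (ha : 0 < a) (hq : 0 ≤ a ^ 2 * x ^ 2 - G * x + b ^ 2)
    (hx : x ≤ G / (2 * a ^ 2)) :
    x ≤ (G - Real.sqrt (G ^ 2 - 4 * a ^ 2 * b ^ 2)) / (2 * a ^ 2) := by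
  have ha2 : 0 < 2 * a ^ 2 := by positivity
  rw [le_div_iff₀ ha2] at hx ⊢
  have hs : Real.sqrt (G ^ 2 - 4 * a ^ 2 * b ^ 2) ≤ G - x * (2 * a ^ 2) :=
    (Real.sqrt_le_left (by linarith)).2 (by nlinarith)
  linarith

end Quadratic

theorem norm_sub_one_lt_mul_norm_of_quadratic_neg {t ξ : ℝ} {η u : ℂ} (ht : 0 < t)
    (hξt : (1 - t ^ 2) * ξ < 1) (hu : ‖u - (1 - η)‖ ≤ t * ξ)
    (hQ : ξ ^ 2 * t ^ 4 - (1 - (2 * (ξ + η.re) - ξ ^ 2 - ‖η‖ ^ 2)) * t ^ 2 + ‖η‖ ^ 2 < 0) :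
    ‖u - 1‖ < t * ‖u‖ := by
  set p := 1 - t ^ 2 with hp
  set v : ℂ := t ^ 2 + p * η
  set w : ℂ := 1 - p * u
  -- `‖u - 1‖ < t‖u‖` says `‖w‖ < t` if `p > 0` and `‖w‖ > t` if `p < 0`, while `w` ranges over
  -- the disk of radius `|p| t ξ` about `v`; the quadratic condition places that disk on the right side
  have hw : p * ((t * ‖u‖) ^ 2 - ‖u - 1‖ ^ 2) = t ^ 2 - ‖w‖ ^ 2 := by
    simp only [w, mul_pow, Complex.sq_norm, Complex.normSq_apply, Complex.sub_re, Complex.sub_im,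
      Complex.mul_re, Complex.mul_im, Complex.one_re, Complex.one_im, Complex.ofReal_re,
      Complex.ofReal_im]
    ring
  have hv : (t * (1 - p * ξ)) ^ 2 - ‖v‖ ^ 2 = -p * (ξ ^ 2 * t ^ 4
      - (1 - (2 * (ξ + η.re) - ξ ^ 2 - ‖η‖ ^ 2)) * t ^ 2 + ‖η‖ ^ 2) := by
    simp only [v, hp, Complex.sq_norm, Complex.normSq_apply, Complex.add_re, Complex.add_im,
      Complex.mul_re, Complex.mul_im, Complex.ofReal_re, Complex.ofReal_im]
    simp only [pow_two, Complex.mul_re, Complex.mul_im, Complex.ofReal_re, Complex.ofReal_im]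
    ring
  have hwv : ‖w - v‖ = |p| * ‖u - (1 - η)‖ := by
    rw [show w - v = -(p : ℂ) * (u - (1 - η)) by simp only [w, v, hp]; push_cast; ring,
      norm_mul, norm_neg, Complex.norm_real, Real.norm_eq_abs]
  suffices ‖u - 1‖ ^ 2 < (t * ‖u‖) ^ 2 from lt_of_pow_lt_pow_left₀ 2 (by positivity) this
  rcases lt_trichotomy p 0 with hneg | hzero | hpos
  · have hvt : t * (1 - p * ξ) < ‖v‖ :=
      lt_of_pow_lt_pow_left₀ 2 (norm_nonneg _) (by nlinarith)
    have : t < ‖w‖ := by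
      have htri := norm_sub_norm_le v w
      rw [norm_sub_rev v w, hwv, abs_of_neg hneg] at htri
      nlinarith [mul_le_mul_of_nonneg_left hu (neg_nonneg.2 hneg.le)]
    nlinarith
  · -- `t = 1`: the region is the half-plane `re u > 1 / 2`
    have ht1 : t = 1 := by nlinarith
    subst ht1
    have hre := Complex.re_le_norm (-(u - (1 - η)))
    rw [norm_neg] at hre
    simp only [Complex.neg_re, Complex.sub_re, Complex.one_re] at hre
    simp only [one_mul, Complex.sq_norm, Complex.normSq_apply, Complex.sub_re,
      Complex.sub_im, Complex.one_re, Complex.one_im]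
    nlinarith
  · have hvt : ‖v‖ < t * (1 - p * ξ) :=
      lt_of_pow_lt_pow_left₀ 2 (by nlinarith) (by nlinarith)
    have : ‖w‖ < t := by
      have htri := norm_le_insert' w v
      rw [hwv, abs_of_pos hpos] at htri
      nlinarith [mul_le_mul_of_nonneg_left hu hpos.le]
    nlinarith [norm_nonneg w]

section PowerFlow

variable {n : ℕ} {Z : Matrix (Fin n) (Fin n) ℂ} {S σ : Fin n → ℂ} {t : ℝ}

theorem xiI_nonneg (i : Fin n) : 0 ≤ xiI Z S i :=
  Finset.sum_nonneg fun _ _ => norm_nonneg _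

theorem xiI_le_xiMax (i : Fin n) : xiI Z S i ≤ xiMax Z S :=
  le_ciSup (Finite.bddAbove_range _) i

theorem norm_etaI_le_etaMax (i : Fin n) : ‖etaI Z σ i‖ ≤ etaMax Z σ :=
  le_ciSup (Finite.bddAbove_range (fun i => ‖etaI Z σ i‖)) i

theorem gammaI_le_gammaMax (i : Fin n) : gammaI Z S σ i ≤ gammaMax Z S σ :=
  le_ciSup (Finite.bddAbove_range _) i

theorem etaMax_nonneg : 0 ≤ etaMax Z σ :=
  Real.iSup_nonneg fun _ => norm_nonneg _

theorem two_mul_sub_sub_le_gammaMax [Nonempty (Fin n)] :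
    2 * (xiMax Z S - etaMax Z σ) - xiMax Z S ^ 2 - etaMax Z σ ^ 2 ≤ gammaMax Z S σ := by
  obtain ⟨m, hm⟩ := exists_eq_ciSup_of_finite (f := xiI Z S)
  have hre : -(etaI Z σ m).re ≤ ‖etaI Z σ m‖ := by
    simpa using Complex.re_le_norm (-etaI Z σ m)
  have hη := norm_etaI_le_etaMax (Z := Z) (σ := σ) m
  calc 2 * (xiMax Z S - etaMax Z σ) - xiMax Z S ^ 2 - etaMax Z σ ^ 2
      ≤ gammaI Z S σ m := by
        rw [gammaI, hm, xiMax]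
        nlinarith [norm_nonneg (etaI Z σ m)]
    _ ≤ gammaMax Z S σ := gammaI_le_gammaMax m

theorem norm_one_sub_one_div_conj {z : ℂ} (hz : z ≠ 0) :
    ‖1 - 1 / (starRingEnd ℂ) z‖ = ‖z - 1‖ / ‖z‖ := by
  rw [show 1 - 1 / (starRingEnd ℂ) z = (starRingEnd ℂ) ((z - 1) / z) by
      rw [map_div₀, map_sub, map_one]; field_simp [(map_ne_zero _).2 hz],
    Complex.norm_conj, norm_div]

theorem norm_sub_one_sub_etaI_le_of_pfMap_eq {u : Fin n → ℂ} (hfix : pfMap Z S σ u = u)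
    (hu : ∀ j, u j ≠ 0) (ht : ∀ j, ‖u j - 1‖ ≤ t * ‖u j‖) (k : Fin n) :
    ‖u k - (1 - etaI Z σ k)‖ ≤ t * xiI Z S k := by
  have hk : u k - (1 - etaI Z σ k)
      = ∑ j, Z k j * (1 - 1 / (starRingEnd ℂ) (u j)) * (starRingEnd ℂ) (S j) := by
    have h := congrFun hfix k
    rw [pfMap] at h
    rw [etaI]
    linear_combination -h
  rw [hk, xiI, Finset.mul_sum]
  refine (norm_sum_le Finset.univ _).trans (Finset.sum_le_sum fun j _ => ?_)
  have hj : ‖u j - 1‖ / ‖u j‖ ≤ t := (div_le_iff₀ (norm_pos_iff.2 (hu j))).2 (ht j)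
  calc ‖Z k j * (1 - 1 / (starRingEnd ℂ) (u j)) * (starRingEnd ℂ) (S j)‖
      = ‖u j - 1‖ / ‖u j‖ * ‖Z k j * S j‖ := by
        simp only [norm_mul, Complex.norm_conj, norm_one_sub_one_div_conj (hu j)]; ring
    _ ≤ t * ‖Z k j * S j‖ := by gcongr

theorem one_sub_sq_mul_xiMax_lt [Nonempty (Fin n)]
    (hc1 : gammaMax Z S σ + 2 * xiMax Z S * etaMax Z σ < 1) (hc2 : xiMax Z S - etaMax Z σ ≤ 1)
    (hξ : 0 < xiMax Z S) (ht : rLow Z S σ < t) :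
    (1 - t ^ 2) * xiMax Z S < 1 := by
  have ht0 : 0 < t := (Real.sqrt_nonneg _).trans_lt ht
  set ξ := xiMax Z S
  set η := etaMax Z σ
  set G := 1 - gammaMax Z S σ
  rcases le_or_gt ξ 1 with hξ1 | hξ1
  · nlinarith [sq_pos_of_pos ht0]
  -- `(ξ - 1) / ξ` lies left of the vertex of `q x = ξ²x² - Gx + η²` with `q ≥ 0` there,
  -- hence below the smaller root `rLow²`
  have hG : G ≤ (ξ - 1) ^ 2 + 2 * η + η ^ 2 := by linarith [two_mul_sub_sub_le_gammaMax (Z := Z) (S := S) (σ := σ)]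
  have hq : 0 ≤ ξ ^ 2 * ((ξ - 1) / ξ) ^ 2 - G * ((ξ - 1) / ξ) + η ^ 2 := by
    have hdiv : ξ * (ξ ^ 2 * ((ξ - 1) / ξ) ^ 2 - G * ((ξ - 1) / ξ) + η ^ 2)
        = ξ * (ξ - 1) ^ 2 - G * (ξ - 1) + ξ * η ^ 2 := by field_simp
    have : 0 ≤ ξ * (ξ - 1) ^ 2 - G * (ξ - 1) + ξ * η ^ 2 := by
      nlinarith [mul_le_mul_of_nonneg_left hG (by linarith : (0 : ℝ) ≤ ξ - 1),
        sq_nonneg (ξ - 1 - η)]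
    exact nonneg_of_mul_nonneg_right (hdiv ▸ this) hξ
  have hvertex : (ξ - 1) / ξ ≤ G / (2 * ξ ^ 2) := by
    rw [div_le_div_iff₀ hξ (by positivity)]
    nlinarith
  have hlt : (ξ - 1) / ξ < t ^ 2 :=
    (le_lower_root_of_quadratic_nonneg hξ hq hvertex).trans_lt ((Real.sqrt_lt' ht0).1 ht)
  rw [div_lt_iff₀ hξ] at hlt
  linarith

theorem norm_sub_one_lt_mul_norm_of_rLow_lt_of_lt_rHigh [Nonempty (Fin n)]
    (hc1 : gammaMax Z S σ + 2 * xiMax Z S * etaMax Z σ < 1) (hc2 : xiMax Z S - etaMax Z σ ≤ 1)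
    (hξ : 0 < xiMax Z S) (hlo : rLow Z S σ < t) (hhi : t < rHigh Z S σ) {i : Fin n} {v : ℂ}
    (hv : ‖v - (1 - etaI Z σ i)‖ ≤ t * xiI Z S i) :
    ‖v - 1‖ < t * ‖v‖ := by
  have ht0 : 0 < t := (Real.sqrt_nonneg _).trans_lt hlo
  have hη := etaMax_nonneg (Z := Z) (σ := σ)
  have hΔ : 0 ≤ (1 - gammaMax Z S σ) ^ 2 - 4 * xiMax Z S ^ 2 * etaMax Z σ ^ 2 := by
    nlinarith [mul_nonneg hξ.le hη]
  have hQ := quadratic_neg_of_mem_Ioo_roots hξ hΔ ((Real.sqrt_lt' ht0).1 hlo)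
    ((Real.lt_sqrt ht0.le).1 hhi)
  have hξi := xiI_le_xiMax (Z := Z) (S := S) i
  have hξi0 := xiI_nonneg (Z := Z) (S := S) i
  have hγi := gammaI_le_gammaMax (Z := Z) (S := S) (σ := σ) i
  have hηi := norm_etaI_le_etaMax (Z := Z) (σ := σ) i
  have hξt := one_sub_sq_mul_xiMax_lt hc1 hc2 hξ hlo
  refine norm_sub_one_lt_mul_norm_of_quadratic_neg ht0 ?_ hv ?_
  · rcases le_or_gt 0 (1 - t ^ 2) with hp | hp
    · nlinarith [mul_le_mul_of_nonneg_left hξi hp]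
    · nlinarith [mul_nonneg hξi0 (neg_nonneg.2 hp.le)]
  · rw [gammaI] at hγi
    nlinarith [pow_le_pow_left₀ hξi0 hξi 2, pow_le_pow_left₀ (norm_nonneg _) hηi 2,
      pow_pos ht0 4, sq_nonneg t]

end PowerFlow

theorem no_pf_fixed_point_outside_general {n : ℕ}
    (Z : Matrix (Fin n) (Fin n) ℂ)
    (σ S : Fin n → ℂ)
    (hc1 : gammaMax Z S σ + 2 * xiMax Z S * etaMax Z σ < 1)
    (hc2 : xiMax Z S - etaMax Z σ ≤ 1)
    (hxi : ∀ i, 0 < xiI Z S i) :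
    ∀ u : Fin n → ℂ, (∀ i, u i ≠ 0) → pfMap Z S σ u = u →
      (∀ i, ‖u i - 1‖ < rHigh Z S σ * ‖u i‖) →
      ∀ i, ‖u i - (1 - etaI Z σ i)‖ ≤ rLow Z S σ * xiI Z S i := by
  intro u hu hfix hU i
  have : Nonempty (Fin n) := ⟨i⟩
  obtain ⟨m, -, hm⟩ := Finset.univ.exists_max_image (fun j => ‖u j - 1‖ / ‖u j‖)
    ⟨i, Finset.mem_univ i⟩
  set t := ‖u m - 1‖ / ‖u m‖
  have hnorm (j : Fin n) : 0 < ‖u j‖ := norm_pos_iff.2 (hu j)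
  have hratio (j : Fin n) : ‖u j - 1‖ ≤ t * ‖u j‖ :=
    (div_le_iff₀ (hnorm j)).1 (hm j (Finset.mem_univ j))
  have hbound := norm_sub_one_sub_etaI_le_of_pfMap_eq hfix hu hratio
  have ht : t ≤ rLow Z S σ := by
    by_contra! hlo
    have hhi : t < rHigh Z S σ := (div_lt_iff₀ (hnorm m)).2 (hU m)
    have hξ : 0 < xiMax Z S := (hxi i).trans_le (xiI_le_xiMax i)
    have := norm_sub_one_lt_mul_norm_of_rLow_lt_of_lt_rHigh hc1 hc2 hξ hlo hhi (hbound m)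
    rw [div_mul_cancel₀ _ (hnorm m).ne'] at this
    exact this.false
  calc ‖u i - (1 - etaI Z σ i)‖ ≤ t * xiI Z S i := hbound i
    _ ≤ rLow Z S σ * xiI Z S i := by gcongr; exact xiI_nonneg i

/-- under conditions (C) with `ξ_i(S) > 0` for all `i`, every fixed point
of `F` lying in `U(r̄) = {u : u_i ≠ 0, |u_i − 1| < r̄·|u_i|}` lies in the closure of
`D(r̲)`. -/
theorem no_pf_fixed_point_outside {n : ℕ} (hn : 1 ≤ n)
    (Z : Matrix (Fin n) (Fin n) ℂ) (hZ : IsUnit Z.det)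
    (S0 σ S : Fin n → ℂ) (hS : S = S0 + σ)
    (hc1 : gammaMax Z S σ + 2 * xiMax Z S * etaMax Z σ < 1)
    (hc2 : xiMax Z S - etaMax Z σ ≤ 1)
    (hxi : ∀ i, 0 < xiI Z S i) :
    ∀ u : Fin n → ℂ, (∀ i, u i ≠ 0) → pfMap Z S σ u = u →
      (∀ i, ‖u i - 1‖ < rHigh Z S σ * ‖u i‖) →
      ∀ i, ‖u i - (1 - etaI Z σ i)‖ ≤ rLow Z S σ * xiI Z S i :=
  no_pf_fixed_point_outside_general Z σ S hc1 hc2 hxi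
end

section
/- For every r > 0 and every u ∈ ℂ^n such that u_i ≠ 0 and |u_i − 1| ≤ r·|u_i| for all i, the image F(u) satisfies |F(u)_i − (1 − η_i(σ))| ≤ r·ξ_i(S) for all i = 1,…,n. That is, F maps the set {u : u_i ≠ 0, |(u_i−1)/u_i| ≤ r for all i} into the closed polydisc centered at (1 − η_1(σ), …, 1 − η_n(σ)) with radii r·ξ_i(S). -/
open Complex

lemma norm_one_sub_one_div_le {𝕜 : Type*} [NormedDivisionRing 𝕜] {z : 𝕜} {r : ℝ}
    (hz : z ≠ 0) (h : ‖z - 1‖ ≤ r * ‖z‖) : ‖1 - 1 / z‖ ≤ r := by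
  calc ‖1 - 1 / z‖ = ‖(z - 1) * z⁻¹‖ := by rw [sub_mul, mul_inv_cancel₀ hz, one_mul, one_div]
    _ = ‖z - 1‖ / ‖z‖ := by rw [norm_mul, norm_inv, div_eq_mul_inv]
    _ ≤ r := (div_le_iff₀ (norm_pos_iff.mpr hz)).mpr h

lemma norm_one_sub_one_div_conj_le {𝕜 : Type*} [RCLike 𝕜] {z : 𝕜} {r : ℝ}
    (hz : z ≠ 0) (h : ‖z - 1‖ ≤ r * ‖z‖) : ‖1 - 1 / (starRingEnd 𝕜) z‖ ≤ r :=
  norm_one_sub_one_div_le ((map_ne_zero _).mpr hz) <| by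
    rwa [← map_one (starRingEnd 𝕜), ← map_sub, RCLike.norm_conj, RCLike.norm_conj]

lemma norm_sum_mul_mul_conj_le {𝕜 ι : Type*} [RCLike 𝕜] (s : Finset ι) (a w b : ι → 𝕜)
    {r : ℝ} (hw : ∀ j ∈ s, ‖w j‖ ≤ r) :
    ‖∑ j ∈ s, a j * w j * (starRingEnd 𝕜) (b j)‖ ≤ r * ∑ j ∈ s, ‖a j * b j‖ := by
  rw [Finset.mul_sum]
  refine (norm_sum_le _ _).trans (Finset.sum_le_sum fun j hj => ?_)
  calc ‖a j * w j * (starRingEnd 𝕜) (b j)‖ = ‖w j‖ * ‖a j * b j‖ := by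
        simp only [norm_mul, RCLike.norm_conj]; ring
    _ ≤ r * ‖a j * b j‖ := by gcongr; exact hw j hj

lemma pfMap_sub_one_sub_etaI {n : ℕ} (Z : Matrix (Fin n) (Fin n) ℂ) (S σ u : Fin n → ℂ)
    (i : Fin n) :
    pfMap Z S σ u i - (1 - etaI Z σ i) =
      ∑ j, Z i j * (1 - 1 / (starRingEnd ℂ) (u j)) * (starRingEnd ℂ) (S j) := by
  simp only [pfMap, etaI]
  ring

theorem pf_map_into_polydisc_general {n : ℕ}
    (Z : Matrix (Fin n) (Fin n) ℂ)
    (σ S : Fin n → ℂ)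
    (r : ℝ) :
    ∀ u : Fin n → ℂ, (∀ i, u i ≠ 0 ∧ ‖u i - 1‖ ≤ r * ‖u i‖) →
      ∀ i, ‖pfMap Z S σ u i - (1 - etaI Z σ i)‖ ≤ r * xiI Z S i := by
  intro u hu i
  rw [pfMap_sub_one_sub_etaI, xiI]
  exact norm_sum_mul_mul_conj_le _ _ _ _ fun j _ =>
    norm_one_sub_one_div_conj_le (hu j).1 (hu j).2

/-- for every `r > 0`, the map `F` sends
`{u : u_i ≠ 0 and |u_i − 1| ≤ r·|u_i| for all i}` into the closed polydisc centered at
`(1 − η_1(σ), …, 1 − η_n(σ))` with radii `r·ξ_i(S)`. -/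
theorem pf_map_into_polydisc {n : ℕ}
    (Z : Matrix (Fin n) (Fin n) ℂ)
    (S0 σ S : Fin n → ℂ) (hS : S = S0 + σ)
    (r : ℝ) (hr : 0 < r) :
    ∀ u : Fin n → ℂ, (∀ i, u i ≠ 0 ∧ ‖u i - 1‖ ≤ r * ‖u i‖) →
      ∀ i, ‖pfMap Z S σ u i - (1 - etaI Z σ i)‖ ≤ r * xiI Z S i :=
  pf_map_into_polydisc_general Z σ S r
end
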